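/- arXiv:0802.0563 — 2 statements merged into one kernel-verified Lean document; each statement's English description precedes it below -/
import Mathlib

section
/- Let q be one of the numbers (√3 − 1)/2, (3 − √5)/2, √2 − 1, (√5 − 1)/2, set Q = q/(1−q), and let f : ℝ → ℝ be a solution of Schilling's problem for q. If there exists δ > 0 such that f is right-hand-side continuous at each point of the interval (Q − δ, Q), or f is left-hand-side continuous at each point of the interval (Q − δ, Q), then f is identically zero. -/
/-!
Put `g t = f (Q - t)`. Then `g` vanishes outside `[0, 2Q]` and
`4 q g (q x) = g x + 2 g (x - 1) + g (x - 2)`, which expresses `g x` through the values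
`g (θ x - k)`, `k = 0, 1, 2`, where `θ = 1 / q`. For the four values of `q`, `θ` is a quadratic
integer whose conjugate `θ'` has `|θ'| < 1`. On the lattice `ℤ + ℤθ` the map `x ↦ θ x - k` acts
on conjugates by `x' ↦ θ' x' - k`, which maps a suitable window `[A, B]` strictly into itself;
so, by induction on the distance of the conjugate from `[A, B]`, `g` vanishes on the whole lattice
as soon as it vanishes at the finitely many lattice points of `[0, 2Q]` with conjugate in
`[A, B]`. At these points the relation is a small linear system with only the trivial solution.
As `θ` is irrational the lattice is dense, so one-sided continuity makes `f` vanish on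
`(Q - δ, Q)`, i.e. `g` vanishes near `0`, and the relation propagates this to all of `ℝ`.
-/

open Set Filter Topology

theorem eq_of_tendsto_nhdsWithin_of_dense {X Y : Type*} [TopologicalSpace X] [TopologicalSpace Y]
    [T2Space Y] {f : X → Y} {D S : Set X} {x : X} {c : Y} (hD : Dense D) (hS : IsOpen S)
    (hx : x ∈ closure S) (hf : Tendsto f (𝓝[S] x) (𝓝 (f x))) (hc : ∀ y ∈ D, f y = c) :
    f x = c := by
  have hx' : x ∈ closure (S ∩ D) :=
    closure_minimal (hD.open_subset_closure_inter hS) isClosed_closure hx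
  have := mem_closure_iff_nhdsWithin_neBot.mp hx'
  refine tendsto_nhds_unique (l := 𝓝[S ∩ D] x)
    (hf.mono_left (nhdsWithin_mono _ inter_subset_left)) ?_
  exact tendsto_const_nhds.congr' (eventually_nhdsWithin_of_forall fun y hy => (hc y hy.2).symm)

theorem dense_setOf_int_add_int_mul {θ : ℝ} (hθ : Irrational θ) :
    Dense {x : ℝ | ∃ a b : ℤ, (a : ℝ) + b * θ = x} := by
  refine (dense_addSubgroupClosure_pair_iff.mpr (by simpa using hθ) :
    Dense (AddSubgroup.closure {1, θ} : Set ℝ)).mono ?_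
  rintro x hx
  obtain ⟨m, n, rfl⟩ := AddSubgroup.mem_closure_pair.mp hx
  exact ⟨m, n, by simp⟩

structure IsReflectedSolution (q : ℝ) (g : ℝ → ℝ) : Prop where
  eqn : ∀ x, 4 * q * g (q * x) = g x + 2 * g (x - 1) + g (x - 2)
  eq_zero_of_notMem : ∀ t ∉ Icc 0 (2 * (q / (1 - q))), g t = 0

theorem IsReflectedSolution.of_schilling {q : ℝ} (hq0 : 0 < q) (hq1 : q < 1) {f : ℝ → ℝ}
    (hfe : ∀ x : ℝ, f (q * x) = (1 / (4 * q)) * (f (x - 1) + f (x + 1) + 2 * f x))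
    (hfv : ∀ x : ℝ, |x| > q / (1 - q) → f x = 0) :
    IsReflectedSolution q (fun t => f (q / (1 - q) - t)) where
  eqn x := by
    have h1q : 1 - q ≠ 0 := by linarith
    have hQ : q * (q / (1 - q) + 1 - x) = q / (1 - q) - q * x := by field_simp; ring
    rw [← hQ, hfe, ← mul_assoc, mul_one_div_cancel (by positivity), one_mul]
    ring_nf
  eq_zero_of_notMem t ht := by
    apply hfv
    have hQ : 0 < q / (1 - q) := div_pos hq0 (by linarith)
    rcases not_and_or.mp ht with ht | ht <;> rw [not_le] at ht
    · rw [abs_of_pos (by linarith)]; linarith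
    · rw [abs_of_neg (by linarith)]; linarith

theorem eq_zero_of_reflected_eqn_of_forall_lt {q s : ℝ} (hq1 : q < 1) {g : ℝ → ℝ}
    (heq : ∀ x, 4 * q * g (q * x) = g x + 2 * g (x - 1) + g (x - 2)) (hs : 0 < s)
    (hg : ∀ t < s, g t = 0) (t : ℝ) : g t = 0 := by
  set η := min 1 (s * (1 - q))
  have hη : 0 < η := lt_min one_pos (mul_pos hs (by linarith))
  have hη1 : η ≤ 1 := min_le_left _ _
  have hη2 : η ≤ s * (1 - q) := min_le_right _ _
  suffices h : ∀ n : ℕ, ∀ t < s + n * η, g t = 0 by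
    obtain ⟨n, hn⟩ := exists_nat_gt ((t - s) / η)
    exact h n t (by rw [div_lt_iff₀ hη] at hn; linarith)
  intro n
  induction n with
  | zero => simpa using hg
  | succ n ih =>
    intro t ht
    rcases lt_or_ge t s with hts | hts
    · exact hg t hts
    push_cast at ht
    -- `q t ≤ t - (1 - q) s ≤ t - η`
    have hqt : q * t < s + n * η := by nlinarith
    have := heq t
    rw [ih _ hqt, ih (t - 1) (by linarith), ih (t - 2) (by linarith)] at this
    linarith

def latticeEval (g : ℝ → ℝ) (θ : ℝ) (a b : ℤ) : ℝ := g (a + b * θ)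

theorem latticeEval_reflected_eqn {q θ : ℝ} {p r : ℤ} {g : ℝ → ℝ}
    (heq : ∀ x, 4 * q * g (q * x) = g x + 2 * g (x - 1) + g (x - 2)) (hqθ : q * θ = 1)
    (hθ : θ ^ 2 = p * θ + r) (a b : ℤ) :
    4 * q * latticeEval g θ a b = latticeEval g θ (b * r) (a + b * p)
      + 2 * latticeEval g θ (b * r - 1) (a + b * p) + latticeEval g θ (b * r - 2) (a + b * p) := by
  have hmul (k : ℤ) : g (θ * (a + b * θ) - k) = latticeEval g θ (b * r - k) (a + b * p) := by
    rw [latticeEval]; congr 1; push_cast; linear_combination b * hθ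
  have h0 := hmul 0
  have h1 := hmul 1
  have h2 := hmul 2
  simp only [Int.cast_zero, sub_zero, Int.cast_one, Int.cast_ofNat] at h0 h1 h2
  rw [latticeEval, ← h0, ← h1, ← h2, ← heq, ← mul_assoc, hqθ, one_mul]

theorem IsReflectedSolution.latticeEval_eq_zero_of_outside {q θ Q : ℝ} {g : ℝ → ℝ}
    (hg : IsReflectedSolution q g) (hQ : q / (1 - q) = Q) (a b : ℤ)
    (h : (a + b * θ : ℝ) < 0 ∨ 2 * Q < a + b * θ) : latticeEval g θ a b = 0 :=
  hg.eq_zero_of_notMem _ fun hmem => by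
    rw [hQ] at hmem
    rcases h with h | h <;> linarith [hmem.1, hmem.2]

theorem mul_mem_Icc_of_mem_Icc {α : Type*} [Ring α] [LinearOrder α] [IsStrictOrderedRing α]
    {a c A B L U : α} (hc : c ∈ Icc A B) (hA : a * A ∈ Icc L U) (hB : a * B ∈ Icc L U) :
    a * c ∈ Icc L U := by
  rcases le_total 0 a with ha | ha
  · exact ⟨hA.1.trans (mul_le_mul_of_nonneg_left hc.1 ha),
      (mul_le_mul_of_nonneg_left hc.2 ha).trans hB.2⟩
  · exact ⟨hB.1.trans (mul_le_mul_of_nonpos_left hc.2 ha),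
      (mul_le_mul_of_nonpos_left hc.1 ha).trans hA.2⟩

theorem mul_sub_mem_Icc_of_window {θ' A B m c k : ℝ} (hθ' : |θ'| ≤ 1) (hm : 0 ≤ m)
    (hA : θ' * A ∈ Icc (A + m + 2) (B - m)) (hB : θ' * B ∈ Icc (A + m + 2) (B - m)) (n : ℕ)
    (hc : c ∈ Icc (A - (n + 1) * m) (B + (n + 1) * m)) (hk : k ∈ Icc 0 2) :
    θ' * c - k ∈ Icc (A - n * m) (B + n * m) := by
  set t := (n + 1 : ℝ) * m
  have ht : |θ' * t| ≤ t := by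
    rw [abs_mul, abs_of_nonneg (by positivity : 0 ≤ t)]
    exact mul_le_of_le_one_left (by positivity) hθ'
  have h1 := neg_abs_le (θ' * t)
  have h2 := le_abs_self (θ' * t)
  have key := mul_mem_Icc_of_mem_Icc (L := A + m + 2 - t) (U := B - m + t) hc
    (by rw [mul_sub]; constructor <;> linarith [hA.1, hA.2])
    (by rw [mul_add]; constructor <;> linarith [hB.1, hB.2])
  constructor <;> linarith [key.1, key.2, hk.1, hk.2]

/-- `θ'` stands for the conjugate of `θ`: both are roots of `X ^ 2 - p X - r`, so the lattice
point `θ (a + b θ) - k` has coordinates `(b r - k, a + b p)` and conjugate `θ' (a + b θ') - k`. -/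
theorem IsReflectedSolution.latticeEval_eq_zero_of_window {q θ θ' A B m : ℝ} {p r : ℤ}
    {g : ℝ → ℝ} (hg : IsReflectedSolution q g) (hqθ : q * θ = 1) (hθ : θ ^ 2 = p * θ + r)
    (hθ' : θ' ^ 2 = p * θ' + r) (hθ'1 : |θ'| ≤ 1) (hm : 0 < m)
    (hA : θ' * A ∈ Icc (A + m + 2) (B - m)) (hB : θ' * B ∈ Icc (A + m + 2) (B - m))
    (hbase : ∀ a b : ℤ, (a + b * θ' : ℝ) ∈ Icc A B →
      (a + b * θ : ℝ) ∈ Icc 0 (2 * (q / (1 - q))) → latticeEval g θ a b = 0) (a b : ℤ) :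
    latticeEval g θ a b = 0 := by
  suffices h : ∀ n : ℕ, ∀ a b : ℤ, (a + b * θ' : ℝ) ∈ Icc (A - n * m) (B + n * m) →
      latticeEval g θ a b = 0 by
    obtain ⟨n, hn⟩ := exists_nat_gt ((|a + b * θ'| + |A| + |B|) / m)
    rw [div_lt_iff₀ hm] at hn
    refine h n a b ⟨?_, ?_⟩
    · linarith [neg_abs_le (a + b * θ' : ℝ), le_abs_self A, abs_nonneg B]
    · linarith [le_abs_self (a + b * θ' : ℝ), neg_abs_le B, abs_nonneg A]
  intro n
  induction n with
  | zero =>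
    intro a b hab
    by_cases hx : (a + b * θ : ℝ) ∈ Icc 0 (2 * (q / (1 - q)))
    · exact hbase a b (by simpa using hab) hx
    · exact hg.eq_zero_of_notMem _ hx
  | succ n ih =>
    intro a b hab
    have hstep (k : ℤ) (hk : (k : ℝ) ∈ Icc 0 2) :
        latticeEval g θ (b * r - k) (a + b * p) = 0 := by
      refine ih _ _ ?_
      have hconj : θ' * (a + b * θ') - k = (b * r - k : ℤ) + (a + b * p : ℤ) * θ' := by
        push_cast; linear_combination b * hθ'
      rw [← hconj]
      exact mul_sub_mem_Icc_of_window hθ'1 hm.le hA hB n (by exact_mod_cast hab) hk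
    have h := latticeEval_reflected_eqn hg.eqn hqθ hθ a b
    have h0 := hstep 0 (by norm_num)
    rw [sub_zero] at h0
    rw [h0, hstep 1 (by norm_num), hstep 2 (by norm_num)] at h
    have hq : q ≠ 0 := by rintro rfl; simp at hqθ
    simpa [hq] using h

theorem schilling_eq_zero_of_latticeEval_eq_zero {q θ : ℝ} (hq0 : 0 < q) (hq1 : q < 1)
    (hθ : Irrational θ)
    (hlat : ∀ g, IsReflectedSolution q g → ∀ a b : ℤ, latticeEval g θ a b = 0) {f : ℝ → ℝ}
    (hfe : ∀ x : ℝ, f (q * x) = (1 / (4 * q)) * (f (x - 1) + f (x + 1) + 2 * f x))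
    (hfv : ∀ x : ℝ, |x| > q / (1 - q) → f x = 0)
    (hδ : ∃ δ > (0 : ℝ),
        (∀ x ∈ Ioo (q / (1 - q) - δ) (q / (1 - q)), Tendsto f (𝓝[Ioi x] x) (𝓝 (f x))) ∨
        (∀ x ∈ Ioo (q / (1 - q) - δ) (q / (1 - q)), Tendsto f (𝓝[Iio x] x) (𝓝 (f x))))
    (x : ℝ) : f x = 0 := by
  set Q := q / (1 - q)
  have hg := IsReflectedSolution.of_schilling hq0 hq1 hfe hfv
  have hzero : ∀ y ∈ (Q - ·) ⁻¹' {x : ℝ | ∃ a b : ℤ, (a : ℝ) + b * θ = x}, f y = 0 := by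
    rintro y ⟨a, b, hab⟩
    simpa [latticeEval, hab, Q] using hlat _ hg a b
  have hD := (dense_setOf_int_add_int_mul hθ).preimage (Homeomorph.subLeft Q).isOpenMap
  obtain ⟨δ, hδ0, hcont⟩ := hδ
  have hnear : ∀ y ∈ Ioo (Q - δ) Q, f y = 0 := by
    intro y hy
    rcases hcont with h | h
    · exact eq_of_tendsto_nhdsWithin_of_dense hD isOpen_Ioi (by simp) (h y hy) hzero
    · exact eq_of_tendsto_nhdsWithin_of_dense hD isOpen_Iio (by simp) (h y hy) hzero
  have hsmall : ∀ t < δ, f (Q - t) = 0 := by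
    intro t ht
    rcases lt_trichotomy t 0 with h | rfl | h
    · exact hg.eq_zero_of_notMem t fun h' => (not_le.mpr h) h'.1
    · simpa [latticeEval] using hlat _ hg 0 0
    · exact hnear _ ⟨by linarith, by linarith⟩
  simpa using eq_zero_of_reflected_eqn_of_forall_lt hq1 hg.eqn hδ0 hsmall (Q - x)

theorem sq_sqrt_two : √2 ^ 2 = 2 := Real.sq_sqrt (by norm_num)

theorem sq_sqrt_three : √3 ^ 2 = 3 := Real.sq_sqrt (by norm_num)

theorem sq_sqrt_five : √5 ^ 2 = 5 := Real.sq_sqrt (by norm_num)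

theorem sqrt_two_bounds : (1.4142 : ℝ) < √2 ∧ √2 < 1.4143 :=
  ⟨by rw [Real.lt_sqrt (by norm_num)]; norm_num, by rw [Real.sqrt_lt' (by norm_num)]; norm_num⟩

theorem sqrt_three_bounds : (1.732 : ℝ) < √3 ∧ √3 < 1.7321 :=
  ⟨by rw [Real.lt_sqrt (by norm_num)]; norm_num, by rw [Real.sqrt_lt' (by norm_num)]; norm_num⟩

theorem sqrt_five_bounds : (2.236 : ℝ) < √5 ∧ √5 < 2.2361 :=
  ⟨by rw [Real.lt_sqrt (by norm_num)]; norm_num, by rw [Real.sqrt_lt' (by norm_num)]; norm_num⟩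

namespace SqrtThree

theorem mul_theta : (√3 - 1) / 2 * (1 + √3) = 1 := by linear_combination sq_sqrt_three / 2

theorem theta_sq : (1 + √3) ^ 2 = (2 : ℤ) * (1 + √3) + (2 : ℤ) := by
  push_cast; linear_combination sq_sqrt_three

theorem conj_sq : (1 - √3) ^ 2 = (2 : ℤ) * (1 - √3) + (2 : ℤ) := by
  push_cast; linear_combination sq_sqrt_three

theorem div_one_sub : (√3 - 1) / 2 / (1 - (√3 - 1) / 2) = √3 / 3 := by
  rw [div_eq_iff (by linarith [sqrt_three_bounds.2])]; linear_combination sq_sqrt_three / 6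

theorem irrational_theta : Irrational (1 + √3) := by
  simpa using Nat.prime_three.irrational_sqrt.intCast_add 1

variable {g : ℝ → ℝ}

local notation "G" => latticeEval g (1 + √3)

theorem latticeEval_core (hg : IsReflectedSolution ((√3 - 1) / 2) g) :
    G 0 0 = 0 ∧ G 1 0 = 0 ∧ G (-2) 1 = 0 := by
  obtain ⟨hs1, hs2⟩ := sqrt_three_bounds
  have e := latticeEval_reflected_eqn hg.eqn mul_theta theta_sq
  have e00 := e 0 0
  have e10 := e 1 0
  have em21 := e (-2) 1
  norm_num at e00 e10 em21
  have out := hg.latticeEval_eq_zero_of_outside (θ := 1 + √3) div_one_sub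
  rw [out (-1) 0 (by norm_num), out (-2) 0 (by norm_num)] at e00
  rw [out 0 1 (by right; push_cast; linarith), out (-1) 1 (by right; push_cast; linarith)] at e10
  rw [out 2 0 (by right; push_cast; linarith)] at em21
  set c := 4 * ((√3 - 1) / 2) with hc
  have h00 : G 0 0 = 0 := eq_zero_of_ne_zero_of_mul_left_eq_zero (x := c - 1) (by linarith)
    (by linear_combination e00)
  have h10 : G 1 0 = 0 := eq_zero_of_ne_zero_of_mul_left_eq_zero (x := c ^ 2 - 2) (by nlinarith)
    (by linear_combination c * e10 + em21 + h00)
  exact ⟨h00, h10, by linear_combination -e10 + c * h10⟩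

theorem latticeEval_eq_zero (hg : IsReflectedSolution ((√3 - 1) / 2) g) (a b : ℤ) :
    G a b = 0 := by
  obtain ⟨hs1, hs2⟩ := sqrt_three_bounds
  obtain ⟨h00, h10, hm21⟩ := latticeEval_core hg
  -- the maps `x ↦ θ' x - k` have attractor `≈ [-4.31, 3.16]`; the window adds a margin that
  -- catches no lattice points of `[0, 2Q]` besides those of `latticeEval_core`
  refine hg.latticeEval_eq_zero_of_window mul_theta theta_sq conj_sq (A := -47 / 10)
    (B := 7 / 2) (m := 1 / 20) (by rw [abs_le]; constructor <;> linarith) (by norm_num)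
    (by constructor <;> linarith) (by constructor <;> linarith) ?_ a b
  rintro a b ⟨hc1, hc2⟩ ⟨hx1, hx2⟩
  rw [div_one_sub] at hx2
  have hb1 : -2 < b := by exact_mod_cast (show (-2 : ℝ) < b by nlinarith)
  have hb2 : b < 2 := by exact_mod_cast (show (b : ℝ) < 2 by nlinarith)
  interval_cases b
  all_goals
    have ha1 : -4 < a := by exact_mod_cast (show (-4 : ℝ) < a by push_cast at *; linarith)
    have ha2 : a < 4 := by exact_mod_cast (show (a : ℝ) < 4 by push_cast at *; linarith)
    interval_cases a
  all_goals first
    | assumption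
    | exfalso; push_cast at hc1 hc2 hx1 hx2; linarith

end SqrtThree

namespace GoldenSq

theorem mul_theta : (3 - √5) / 2 * ((3 + √5) / 2) = 1 := by linear_combination -sq_sqrt_five / 4

theorem theta_sq : ((3 + √5) / 2) ^ 2 = (3 : ℤ) * ((3 + √5) / 2) + (-1 : ℤ) := by
  push_cast; linear_combination sq_sqrt_five / 4

theorem conj_sq : ((3 - √5) / 2) ^ 2 = (3 : ℤ) * ((3 - √5) / 2) + (-1 : ℤ) := by
  push_cast; linear_combination sq_sqrt_five / 4

theorem div_one_sub : (3 - √5) / 2 / (1 - (3 - √5) / 2) = (√5 - 1) / 2 := by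
  rw [div_eq_iff (by linarith [sqrt_five_bounds.1])]; linear_combination -sq_sqrt_five / 4

theorem irrational_theta : Irrational ((3 + √5) / 2) := by
  simpa using (Nat.prime_five.irrational_sqrt.natCast_add 3).div_natCast two_ne_zero

variable {g : ℝ → ℝ}

local notation "G" => latticeEval g ((3 + √5) / 2)

theorem latticeEval_core (hg : IsReflectedSolution ((3 - √5) / 2) g) :
    G 0 0 = 0 ∧ G (-2) 1 = 0 ∧ G (-4) 2 = 0 := by
  obtain ⟨hs1, hs2⟩ := sqrt_five_bounds
  have e := latticeEval_reflected_eqn hg.eqn mul_theta theta_sq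
  have e00 := e 0 0
  have em21 := e (-2) 1
  have em42 := e (-4) 2
  norm_num at e00 em21 em42
  have out := hg.latticeEval_eq_zero_of_outside (θ := (3 + √5) / 2) div_one_sub
  rw [out (-1) 0 (by norm_num), out (-2) 0 (by norm_num)] at e00
  rw [out (-1) 1 (by right; push_cast; linarith), out (-3) 1 (by left; push_cast; linarith)] at em21
  rw [out (-2) 2 (by right; push_cast; linarith), out (-3) 2 (by right; push_cast; linarith)] at em42
  set c := 4 * ((3 - √5) / 2) with hc
  exact ⟨eq_zero_of_ne_zero_of_mul_left_eq_zero (x := c - 1) (by linarith)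
      (by linear_combination e00),
    eq_zero_of_ne_zero_of_mul_left_eq_zero (x := c - 2) (by linarith)
      (by linear_combination em21),
    eq_zero_of_ne_zero_of_mul_left_eq_zero (x := c - 1) (by linarith)
      (by linear_combination em42)⟩

theorem latticeEval_eq_zero (hg : IsReflectedSolution ((3 - √5) / 2) g) (a b : ℤ) :
    G a b = 0 := by
  obtain ⟨hs1, hs2⟩ := sqrt_five_bounds
  obtain ⟨h00, hm21, hm42⟩ := latticeEval_core hg
  -- attractor `≈ [-3.24, 0]`
  refine hg.latticeEval_eq_zero_of_window mul_theta theta_sq conj_sq (A := -7 / 2)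
    (B := 1 / 2) (m := 1 / 10) (by rw [abs_le]; constructor <;> linarith) (by norm_num)
    (by constructor <;> linarith) (by constructor <;> linarith) ?_ a b
  rintro a b ⟨hc1, hc2⟩ ⟨hx1, hx2⟩
  rw [div_one_sub] at hx2
  have hb1 : -1 < b := by exact_mod_cast (show (-1 : ℝ) < b by nlinarith)
  have hb2 : b < 3 := by exact_mod_cast (show (b : ℝ) < 3 by nlinarith)
  interval_cases b
  all_goals
    have ha1 : -6 < a := by exact_mod_cast (show (-6 : ℝ) < a by push_cast at *; linarith)
    have ha2 : a < 2 := by exact_mod_cast (show (a : ℝ) < 2 by push_cast at *; linarith)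
    interval_cases a
  all_goals first
    | assumption
    | exfalso; push_cast at hc1 hc2 hx1 hx2; linarith

end GoldenSq

namespace SqrtTwo

theorem mul_theta : (√2 - 1) * (1 + √2) = 1 := by linear_combination sq_sqrt_two

theorem theta_sq : (1 + √2) ^ 2 = (2 : ℤ) * (1 + √2) + (1 : ℤ) := by
  push_cast; linear_combination sq_sqrt_two

theorem conj_sq : (1 - √2) ^ 2 = (2 : ℤ) * (1 - √2) + (1 : ℤ) := by
  push_cast; linear_combination sq_sqrt_two

theorem div_one_sub : (√2 - 1) / (1 - (√2 - 1)) = √2 / 2 := by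
  rw [div_eq_iff (by linarith [sqrt_two_bounds.2])]; linear_combination sq_sqrt_two / 2

theorem irrational_theta : Irrational (1 + √2) := by
  simpa using irrational_sqrt_two.intCast_add 1

variable {g : ℝ → ℝ}

local notation "G" => latticeEval g (1 + √2)

theorem latticeEval_core (hg : IsReflectedSolution (√2 - 1) g) :
    G 0 0 = 0 ∧ G 1 0 = 0 ∧ G (-2) 1 = 0 ∧ G (-1) 1 = 0 := by
  obtain ⟨hs1, hs2⟩ := sqrt_two_bounds
  have e := latticeEval_reflected_eqn hg.eqn mul_theta theta_sq
  have e00 := e 0 0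
  have e10 := e 1 0
  have em21 := e (-2) 1
  have em11 := e (-1) 1
  norm_num at e00 e10 em21 em11
  have out := hg.latticeEval_eq_zero_of_outside (θ := 1 + √2) div_one_sub
  rw [out (-1) 0 (by norm_num), out (-2) 0 (by norm_num)] at e00
  rw [out 0 1 (by right; push_cast; linarith)] at e10
  rw [out (-1) 0 (by norm_num)] at em21
  rw [out 1 1 (by right; push_cast; linarith), out 0 1 (by right; push_cast; linarith)] at em11
  set c := 4 * (√2 - 1) with hc
  have h00 : G 0 0 = 0 := eq_zero_of_ne_zero_of_mul_left_eq_zero (x := c - 1) (by linarith)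
    (by linear_combination e00)
  have hm11 : G (-1) 1 = 0 := eq_zero_of_ne_zero_of_mul_left_eq_zero (x := c - 1) (by linarith)
    (by linear_combination em11)
  have h10 : G 1 0 = 0 := eq_zero_of_ne_zero_of_mul_left_eq_zero (x := c ^ 2 - 1) (by nlinarith)
    (by linear_combination c * e10 + em21 + 2 * c * hm11 + 2 * h00)
  exact ⟨h00, h10, by linear_combination -e10 + c * h10 - 2 * hm11, hm11⟩

theorem latticeEval_eq_zero (hg : IsReflectedSolution (√2 - 1) g) (a b : ℤ) : G a b = 0 := by
  obtain ⟨hs1, hs2⟩ := sqrt_two_bounds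
  obtain ⟨h00, h10, hm21, hm11⟩ := latticeEval_core hg
  -- attractor `≈ [-2.41, 1]`
  refine hg.latticeEval_eq_zero_of_window mul_theta theta_sq conj_sq (A := -3) (B := 2)
    (m := 1 / 10) (by rw [abs_le]; constructor <;> linarith) (by norm_num)
    (by constructor <;> linarith) (by constructor <;> linarith) ?_ a b
  rintro a b ⟨hc1, hc2⟩ ⟨hx1, hx2⟩
  rw [div_one_sub] at hx2
  have hb1 : -1 < b := by exact_mod_cast (show (-1 : ℝ) < b by nlinarith)
  have hb2 : b < 2 := by exact_mod_cast (show (b : ℝ) < 2 by nlinarith)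
  interval_cases b
  all_goals
    have ha1 : -3 < a := by exact_mod_cast (show (-3 : ℝ) < a by push_cast at *; linarith)
    have ha2 : a < 2 := by exact_mod_cast (show (a : ℝ) < 2 by push_cast at *; linarith)
    interval_cases a
  all_goals first
    | assumption
    | exfalso; push_cast at hc1 hc2 hx1 hx2; linarith

end SqrtTwo

namespace Golden

theorem mul_theta : (√5 - 1) / 2 * ((1 + √5) / 2) = 1 := by linear_combination sq_sqrt_five / 4

theorem theta_sq : ((1 + √5) / 2) ^ 2 = (1 : ℤ) * ((1 + √5) / 2) + (1 : ℤ) := by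
  push_cast; linear_combination sq_sqrt_five / 4

theorem conj_sq : ((1 - √5) / 2) ^ 2 = (1 : ℤ) * ((1 - √5) / 2) + (1 : ℤ) := by
  push_cast; linear_combination sq_sqrt_five / 4

theorem div_one_sub : (√5 - 1) / 2 / (1 - (√5 - 1) / 2) = (1 + √5) / 2 := by
  rw [div_eq_iff (by linarith [sqrt_five_bounds.2])]; linear_combination sq_sqrt_five / 4

theorem irrational_theta : Irrational ((1 + √5) / 2) := by
  simpa using (Nat.prime_five.irrational_sqrt.natCast_add 1).div_natCast two_ne_zero

theorem cycle_eq_zero {c u v w y z : ℝ} (hc : c ≠ 0) (hc2 : c ^ 2 - 2 ≠ 0)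
    (hdet : (c - 2) * (c ^ 2 - 2) - 2 ≠ 0) (hu : c * u = w + 2 * v) (hv : c * v = u)
    (hw : c * w = y + 2 * w + v) (hy : c * y = z) (hz : c * z = 2 * y + w) :
    u = 0 ∧ v = 0 ∧ w = 0 ∧ y = 0 ∧ z = 0 := by
  have hw0 : w = 0 := eq_zero_of_ne_zero_of_mul_left_eq_zero
    (x := c * ((c - 2) * (c ^ 2 - 2) - 2)) (mul_ne_zero hc hdet)
    (by linear_combination (c ^ 2 - 2) * c * hw + c ^ 2 * hy + c ^ 2 * hv + c * hz + c * hu)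
  have hu0 : u = 0 := eq_zero_of_ne_zero_of_mul_left_eq_zero hc2
    (by linear_combination c * hu + 2 * hv + c * hw0)
  have hz0 : z = 0 := eq_zero_of_ne_zero_of_mul_left_eq_zero hc2
    (by linear_combination c * hz + 2 * hy + c * hw0)
  exact ⟨hu0, eq_zero_of_ne_zero_of_mul_left_eq_zero hc (by linear_combination hv + hu0), hw0,
    eq_zero_of_ne_zero_of_mul_left_eq_zero hc (by linear_combination hy + hz0), hz0⟩

variable {g : ℝ → ℝ}

local notation "G" => latticeEval g ((1 + √5) / 2)

theorem latticeEval_core (hg : IsReflectedSolution ((√5 - 1) / 2) g) :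
    G 0 0 = 0 ∧ G 1 0 = 0 ∧ G 2 0 = 0 ∧ G (-1) 1 = 0 ∧ G 0 1 = 0 ∧ G 1 1 = 0 ∧
      G (-2) 2 = 0 ∧ G (-1) 2 = 0 ∧ G 0 2 = 0 := by
  obtain ⟨hs1, hs2⟩ := sqrt_five_bounds
  have e := latticeEval_reflected_eqn hg.eqn mul_theta theta_sq
  have e00 := e 0 0
  have e02 := e 0 2
  have e10 := e 1 0
  have em11 := e (-1) 1
  have e01 := e 0 1
  have e11 := e 1 1
  have em12 := e (-1) 2
  have e20 := e 2 0
  have em22 := e (-2) 2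
  norm_num at e00 e02 e10 em11 e01 e11 em12 e20 em22
  have out := hg.latticeEval_eq_zero_of_outside (θ := (1 + √5) / 2) div_one_sub
  rw [out (-1) 0 (by norm_num), out (-2) 0 (by norm_num)] at e00
  rw [out 2 2 (by right; push_cast; linarith), out 1 2 (by right; push_cast; linarith)] at e02
  rw [out (-2) 1 (by left; push_cast; linarith)] at e10
  rw [out (-1) 0 (by norm_num)] at em11
  rw [out 1 2 (by right; push_cast; linarith)] at e11
  rw [out 2 1 (by right; push_cast; linarith)] at em12
  set c := 4 * ((√5 - 1) / 2) with hc
  -- `76 √5 - 170 ≈ -0.06`: this is why the bounds on `√5` have to be sharp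
  have hdet : (c - 2) * (c ^ 2 - 2) - 2 = 76 * √5 - 170 := by
    rw [hc]; linear_combination (8 * √5 - 32) * sq_sqrt_five
  have h00 : G 0 0 = 0 := eq_zero_of_ne_zero_of_mul_left_eq_zero (x := c - 1) (by linarith)
    (by linear_combination e00)
  have h02 : G 0 2 = 0 := eq_zero_of_ne_zero_of_mul_left_eq_zero (x := c - 1) (by linarith)
    (by linear_combination e02)
  obtain ⟨h10, hm11, h01, h11, hm12⟩ := cycle_eq_zero (c := c) (u := G 1 0) (v := G (-1) 1)
    (w := G 0 1) (y := G 1 1) (z := G (-1) 2) (by linarith) (by nlinarith)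
    (by rw [hdet]; linarith) (by linear_combination e10) (by linear_combination em11 + 2 * h00)
    (by linear_combination e01) (by linear_combination e11 + 2 * h02) (by linear_combination em12)
  have h20 : G 2 0 = 0 := eq_zero_of_ne_zero_of_mul_left_eq_zero (x := c ^ 2 - 1) (by nlinarith)
    (by linear_combination c * e20 + em22 + c * h02 + 2 * c * hm12 + 2 * h10 + h00)
  have hm22 : G (-2) 2 = 0 := eq_zero_of_ne_zero_of_mul_left_eq_zero (x := c) (by linarith)
    (by linear_combination em22 + h20 + 2 * h10 + h00)
  exact ⟨h00, h10, h20, hm11, h01, h11, hm22, hm12, h02⟩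

theorem latticeEval_eq_zero (hg : IsReflectedSolution ((√5 - 1) / 2) g) (a b : ℤ) :
    G a b = 0 := by
  obtain ⟨hs1, hs2⟩ := sqrt_five_bounds
  obtain ⟨h00, h10, h20, hm11, h01, h11, hm22, hm12, h02⟩ := latticeEval_core hg
  -- attractor `≈ [-3.24, 2]`
  refine hg.latticeEval_eq_zero_of_window mul_theta theta_sq conj_sq (A := -7 / 2)
    (B := 23 / 10) (m := 1 / 20) (by rw [abs_le]; constructor <;> linarith) (by norm_num)
    (by constructor <;> linarith) (by constructor <;> linarith) ?_ a b
  rintro a b ⟨hc1, hc2⟩ ⟨hx1, hx2⟩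
  rw [div_one_sub] at hx2
  have hb1 : -2 < b := by exact_mod_cast (show (-2 : ℝ) < b by nlinarith)
  have hb2 : b < 4 := by exact_mod_cast (show (b : ℝ) < 4 by nlinarith)
  interval_cases b
  all_goals
    have ha1 : -5 < a := by exact_mod_cast (show (-5 : ℝ) < a by push_cast at *; linarith)
    have ha2 : a < 5 := by exact_mod_cast (show (a : ℝ) < 5 by push_cast at *; linarith)
    interval_cases a
  all_goals first
    | assumption
    | exfalso; push_cast at hc1 hc2 hx1 hx2; linarith

end Golden

theorem schilling_onesided_cont_right_interval (q : ℝ)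
    (hq : q = (Real.sqrt 3 - 1) / 2 ∨ q = (3 - Real.sqrt 5) / 2 ∨
        q = Real.sqrt 2 - 1 ∨ q = (Real.sqrt 5 - 1) / 2)
    (f : ℝ → ℝ)
    (hfe : ∀ x : ℝ, f (q * x) = (1 / (4 * q)) * (f (x - 1) + f (x + 1) + 2 * f x))
    (hfv : ∀ x : ℝ, |x| > q / (1 - q) → f x = 0)
    (hδ : ∃ δ > (0 : ℝ),
        (∀ x ∈ Set.Ioo (q / (1 - q) - δ) (q / (1 - q)),
            Filter.Tendsto f (nhdsWithin x (Set.Ioi x)) (nhds (f x))) ∨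
        (∀ x ∈ Set.Ioo (q / (1 - q) - δ) (q / (1 - q)),
            Filter.Tendsto f (nhdsWithin x (Set.Iio x)) (nhds (f x)))) :
    ∀ x : ℝ, f x = 0 := by
  obtain ⟨h2, h2'⟩ := sqrt_two_bounds
  obtain ⟨h3, h3'⟩ := sqrt_three_bounds
  obtain ⟨h5, h5'⟩ := sqrt_five_bounds
  rcases hq with rfl | rfl | rfl | rfl
  · exact schilling_eq_zero_of_latticeEval_eq_zero (by linarith) (by linarith)
      SqrtThree.irrational_theta (fun _ => SqrtThree.latticeEval_eq_zero) hfe hfv hδ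
  · exact schilling_eq_zero_of_latticeEval_eq_zero (by linarith) (by linarith)
      GoldenSq.irrational_theta (fun _ => GoldenSq.latticeEval_eq_zero) hfe hfv hδ
  · exact schilling_eq_zero_of_latticeEval_eq_zero (by linarith) (by linarith)
      SqrtTwo.irrational_theta (fun _ => SqrtTwo.latticeEval_eq_zero) hfe hfv hδ
  · exact schilling_eq_zero_of_latticeEval_eq_zero (by linarith) (by linarith)
      Golden.irrational_theta (fun _ => Golden.latticeEval_eq_zero) hfe hfv hδ
end

section
/- Let q = (3 − √5)/2 and let f : ℝ → ℝ be a solution of Schilling's problem for q. Then f(0) = 0, f(1 − q) = 0 and f(−1 + q) = 0. -/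
/-!
For `q² - 3q + 1 = 0` the support bound `Q = q / (1 - q)` equals `1 - q`, and the maps
`x ↦ q x` send `0 ↦ 0` and `2 - q ↦ 1 - q`. At `x = 0` the equation involves only `f 0` and
the values `f (±1)`, which vanish because `Q < 1`; at `x = 2 - q` it involves only `f (1 - q)`
and the values at `2 - q` and `3 - q`, which lie outside `[-Q, Q]`. In both cases `f` at the
point equals a multiple `≠ 1` of itself, so it is `0`. The point `-1 + q` follows by symmetry
`x ↦ -x` of the problem.
-/

structure IsSchillingSolution (q : ℝ) (f : ℝ → ℝ) : Prop where
  apply_mul : ∀ x, f (q * x) = 1 / (4 * q) * (f (x - 1) + f (x + 1) + 2 * f x)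
  eq_zero_of_lt_abs : ∀ x, q / (1 - q) < |x| → f x = 0

lemma div_four_mul_ne_one {k q : ℝ} (hk : k ≠ 4 * q) : k / (4 * q) ≠ 1 := by
  rcases eq_or_ne q 0 with rfl | hq
  · simp
  · rwa [Ne, div_eq_one_iff_eq (by positivity)]

lemma div_one_sub_eq_one_sub {q : ℝ} (hq : 1 - 3 * q + q ^ 2 = 0) : q / (1 - q) = 1 - q := by
  rw [div_eq_iff (by rw [sub_ne_zero]; rintro rfl; norm_num at hq)]
  linear_combination -hq

namespace IsSchillingSolution

variable {q : ℝ} {f : ℝ → ℝ}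

theorem comp_neg (hf : IsSchillingSolution q f) : IsSchillingSolution q (fun x ↦ f (-x)) where
  apply_mul x := by
    rw [← mul_neg, hf.apply_mul, neg_sub', neg_add', sub_neg_eq_add, add_comm (f _)]
  eq_zero_of_lt_abs x hx := hf.eq_zero_of_lt_abs (-x) (by rwa [abs_neg])

theorem apply_zero_eq_zero (hf : IsSchillingSolution q f) (hQ : q / (1 - q) < 1) : f 0 = 0 := by
  have hq : (2 : ℝ) ≠ 4 * q := by
    intro h
    obtain rfl : q = 1 / 2 := by linarith
    norm_num at hQ
  have h := hf.apply_mul 0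
  rw [mul_zero, zero_sub, zero_add, hf.eq_zero_of_lt_abs (-1) (by simpa using hQ),
    hf.eq_zero_of_lt_abs 1 (by simpa using hQ), zero_add, zero_add, ← mul_assoc,
    one_div_mul_eq_div] at h
  exact eq_zero_of_mul_eq_self_left (div_four_mul_ne_one hq) h.symm

theorem apply_sub_one_eq_zero (hf : IsSchillingSolution q f) (hq : q ≠ 1 / 4) {x : ℝ}
    (hx : q * x = x - 1) (h₀ : f x = 0) (h₁ : f (x + 1) = 0) : f (x - 1) = 0 := by
  have h := hf.apply_mul x
  rw [hx, h₀, h₁, add_zero, mul_zero, add_zero] at h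
  exact eq_zero_of_mul_eq_self_left (div_four_mul_ne_one (by contrapose hq; linarith)) h.symm

theorem apply_one_sub_eq_zero (hf : IsSchillingSolution q f) (hq : 1 - 3 * q + q ^ 2 = 0) :
    f (1 - q) = 0 := by
  have hout : ∀ x, 1 - q < x → f x = 0 := fun x hx ↦
    hf.eq_zero_of_lt_abs x (by rw [div_one_sub_eq_one_sub hq]; exact hx.trans_le (le_abs_self x))
  have h := hf.apply_sub_one_eq_zero (by rintro rfl; norm_num at hq) (x := 2 - q)
    (by linear_combination -hq) (hout _ (by linarith)) (hout _ (by linarith))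
  rwa [show 2 - q - 1 = 1 - q by ring] at h

end IsSchillingSolution

theorem schilling_35_values (q : ℝ) (hq : q = (3 - Real.sqrt 5) / 2)
    (f : ℝ → ℝ)
    (hfe : ∀ x : ℝ, f (q * x) = (1 / (4 * q)) * (f (x - 1) + f (x + 1) + 2 * f x))
    (hfv : ∀ x : ℝ, |x| > q / (1 - q) → f x = 0) :
    f 0 = 0 ∧ f (1 - q) = 0 ∧ f (-1 + q) = 0 := by
  have hroot : 1 - 3 * q + q ^ 2 = 0 := by
    rw [hq]; linear_combination (1 / 4 : ℝ) * Real.sq_sqrt (show (0 : ℝ) ≤ 5 by norm_num)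
  have hf : IsSchillingSolution q f := ⟨hfe, hfv⟩
  refine ⟨hf.apply_zero_eq_zero ?_, hf.apply_one_sub_eq_zero hroot, ?_⟩
  · rw [div_one_sub_eq_one_sub hroot]
    nlinarith
  · simpa [neg_sub, sub_eq_neg_add] using hf.comp_neg.apply_one_sub_eq_zero hroot
end
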